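/- There exist a group G and subgroups K ≤ H₀ ≤ G, with all three groups G, H₀, K finitely generated, such that K is co-amenable in G but K is not co-amenable in H₀. -/

import Mathlib

/-- The space ℓ∞(X) of bounded real-valued functions on `X`,
as a submodule of `X → ℝ`. -/
def BddFns (X : Type*) : Submodule ℝ (X → ℝ) where
  carrier := {f | ∃ C : ℝ, ∀ x, |f x| ≤ C}
  add_mem' := by
    rintro f g ⟨C, hC⟩ ⟨D, hD⟩
    exact ⟨C + D, fun x => (abs_add_le _ _).trans (add_le_add (hC x) (hD x))⟩
  zero_mem' := ⟨0, fun x => by simp⟩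
  smul_mem' := by
    rintro c f ⟨C, hC⟩
    exact ⟨|c| * C, fun x => by
      simp only [Pi.smul_apply, smul_eq_mul, abs_mul]
      exact mul_le_mul_of_nonneg_left (hC x) (abs_nonneg c)⟩

/-- Left translation of a function on a `G`-set: `(g · f)(x) = f (g⁻¹ • x)`. -/
def lshift {G X : Type*} [Group G] [MulAction G X] (g : G) (f : X → ℝ) : X → ℝ :=
  fun x => f (g⁻¹ • x)

lemma lshift_mem {G X : Type*} [Group G] [MulAction G X] (g : G) {f : X → ℝ}
    (hf : f ∈ BddFns X) : lshift g f ∈ BddFns X := by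
  obtain ⟨C, hC⟩ := hf
  exact ⟨C, fun x => hC _⟩

/-- A `G`-invariant mean on ℓ∞(X): a linear functional `m` with `m 1 = 1`,
`m f ≥ 0` for `f ≥ 0` pointwise, invariant under the `G`-action. -/
structure InvariantMean (G : Type*) (X : Type*) [Group G] [MulAction G X] where
  toFun : (BddFns X) →ₗ[ℝ] ℝ
  norm_one : toFun ⟨(fun _ => 1), ⟨1, fun _ => by norm_num⟩⟩ = 1
  nonneg : ∀ f : BddFns X, (∀ x, 0 ≤ (f : X → ℝ) x) → 0 ≤ toFun f
  invariant : ∀ (g : G) (f : BddFns X),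
    toFun ⟨lshift g (f : X → ℝ), lshift_mem g f.2⟩ = toFun f

/-- A subgroup `H ≤ G` is co-amenable in `G` if there is a `G`-invariant mean
on ℓ∞(G/H), where `G/H` is the left coset space. -/
def Subgroup.Coamenable {G : Type*} [Group G] (H : Subgroup G) : Prop :=
  Nonempty (InvariantMean G (G ⧸ H))

/-- A group is amenable if there is a left-translation-invariant mean on ℓ∞(G). -/
def AmenableGroup (G : Type*) [Group G] : Prop :=
  Nonempty (InvariantMean G G)

/-!
Let `φ` be an injective endomorphism of a group `H` and `G = ⟨H, t | t h t⁻¹ = φ h⟩` its ascending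
HNN extension; take `H₀ = H` and `K = φ(H)`. Since `tᵏ h t⁻ᵏ = φᵏ(h) ∈ K` for `k ≥ 1`, the ray of
cosets `t⁻ᵏ K` is fixed pointwise by `H` and shifted by `t`, so Cesàro averages along the ray,
taken to an ultralimit, form a `G`-invariant mean on `G/K`. If moreover `φ(H)` lies in the kernel
of a surjection `π : H → F₂`, an `H`-invariant mean on `H/K` would push forward to an invariant
mean on `F₂`, which is impossible by the paradoxical decomposition of `F₂` by first letters.
Such `φ` and `π` exist on the free group `H` on `a, b, c, d`: `π` kills `c, d`, and `φ` sends the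
four letters to `c⁻ⁿ d cⁿ` for `n = 0, …, 3`, which generate a free subgroup of `⟨c, d⟩`.
-/

open Filter Topology Function

namespace BddFns

variable {X Y : Type*}

lemma const_mem (c : ℝ) : (fun _ : X => c) ∈ BddFns X := ⟨|c|, fun _ => le_rfl⟩

def comap (θ : X → Y) : BddFns Y →ₗ[ℝ] BddFns X :=
  (LinearMap.funLeft ℝ ℝ θ).restrict fun _ ⟨C, hC⟩ => ⟨C, fun x => hC (θ x)⟩

@[simp] lemma comap_apply (θ : X → Y) (f : BddFns Y) (x : X) :
    (comap θ f : X → ℝ) x = (f : Y → ℝ) (θ x) := rfl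

noncomputable def cesaro : BddFns ℕ →ₗ[ℝ] BddFns ℕ where
  toFun u := ⟨fun n => (∑ k ∈ Finset.range (n + 1), (u : ℕ → ℝ) k) / (n + 1), by
    obtain ⟨C, hC⟩ := u.2
    refine ⟨C, fun n => ?_⟩
    rw [abs_div, abs_of_pos (by positivity : (0 : ℝ) < n + 1), div_le_iff₀ (by positivity)]
    calc |∑ k ∈ Finset.range (n + 1), (u : ℕ → ℝ) k|
        ≤ ∑ k ∈ Finset.range (n + 1), |(u : ℕ → ℝ) k| := Finset.abs_sum_le_sum_abs _ _
      _ ≤ ∑ _k ∈ Finset.range (n + 1), C := Finset.sum_le_sum fun k _ => hC k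
      _ = C * (n + 1) := by simp [mul_comm]⟩
  map_add' u v := by
    ext n
    simp [Finset.sum_add_distrib, add_div]
  map_smul' c u := by
    ext n
    simp [← Finset.mul_sum, mul_div_assoc]

lemma cesaro_apply (u : BddFns ℕ) (n : ℕ) :
    (cesaro u : ℕ → ℝ) n = (∑ k ∈ Finset.range (n + 1), (u : ℕ → ℝ) k) / (n + 1) := rfl

lemma tendsto_cesaro_comap_succ_sub (u : BddFns ℕ) :
    Tendsto (fun n => (cesaro (comap (· + 1) u) : ℕ → ℝ) n - (cesaro u : ℕ → ℝ) n) atTop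
      (𝓝 0) := by
  obtain ⟨C, hC⟩ := u.2
  have htel : ∀ n, (cesaro (comap (· + 1) u) : ℕ → ℝ) n - (cesaro u : ℕ → ℝ) n
      = ((u : ℕ → ℝ) (n + 1) - (u : ℕ → ℝ) 0) / (n + 1) := by
    intro n
    rw [cesaro_apply, cesaro_apply, div_sub_div_same, ← Finset.sum_sub_distrib]
    exact congrArg (· / _) (Finset.sum_range_sub (u : ℕ → ℝ) _)
  have hlim : Tendsto (fun n : ℕ => 2 * C * (1 / ((n : ℝ) + 1))) atTop (𝓝 0) := by
    simpa using tendsto_one_div_add_atTop_nhds_zero_nat.const_mul (2 * C)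
  refine squeeze_zero_norm (fun n => ?_) hlim
  rw [htel, Real.norm_eq_abs, abs_div, abs_of_pos (by positivity : (0 : ℝ) < n + 1), mul_one_div]
  gcongr
  calc |(u : ℕ → ℝ) (n + 1) - (u : ℕ → ℝ) 0| ≤ |(u : ℕ → ℝ) (n + 1)| + |(u : ℕ → ℝ) 0| :=
        abs_sub _ _
    _ ≤ 2 * C := by linarith [hC (n + 1), hC 0]

end BddFns

section Ultralimit

variable {ι : Type*} (𝒰 : Ultrafilter ι)

lemma BddFns.exists_tendsto (u : BddFns ι) : ∃ l, Tendsto (u : ι → ℝ) 𝒰 (𝓝 l) := by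
  obtain ⟨C, hC⟩ := u.2
  have hmem : (𝒰.map (u : ι → ℝ) : Filter ℝ) ≤ 𝓟 (Set.Icc (-C) C) :=
    le_principal_iff.2 (mem_map.2 (univ_mem' fun i => abs_le.1 (hC i)))
  obtain ⟨l, -, hl⟩ := isCompact_Icc.ultrafilter_le_nhds _ hmem
  exact ⟨l, hl⟩

noncomputable def ultraLim : BddFns ι →ₗ[ℝ] ℝ where
  toFun u := limUnder (𝒰 : Filter ι) (u : ι → ℝ)
  map_add' u v := (((tendsto_nhds_limUnder (BddFns.exists_tendsto 𝒰 u)).add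
    (tendsto_nhds_limUnder (BddFns.exists_tendsto 𝒰 v))).limUnder_eq)
  map_smul' c u := ((tendsto_nhds_limUnder (BddFns.exists_tendsto 𝒰 u)).const_mul c).limUnder_eq

variable {𝒰}

lemma ultraLim_eq_of_tendsto {u : BddFns ι} {l : ℝ} (h : Tendsto (u : ι → ℝ) 𝒰 (𝓝 l)) :
    ultraLim 𝒰 u = l :=
  h.limUnder_eq

lemma tendsto_ultraLim (u : BddFns ι) : Tendsto (u : ι → ℝ) 𝒰 (𝓝 (ultraLim 𝒰 u)) :=
  tendsto_nhds_limUnder (BddFns.exists_tendsto 𝒰 u)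

lemma ultraLim_const (c : ℝ) : ultraLim 𝒰 ⟨_, BddFns.const_mem c⟩ = c :=
  ultraLim_eq_of_tendsto tendsto_const_nhds

lemma ultraLim_nonneg {u : BddFns ι} (hu : ∀ i, 0 ≤ (u : ι → ℝ) i) : 0 ≤ ultraLim 𝒰 u :=
  ge_of_tendsto (tendsto_ultraLim u) (Eventually.of_forall hu)

lemma ultraLim_eq_of_tendsto_sub {l : Filter ι} (h𝒰 : ↑𝒰 ≤ l) {u v : BddFns ι}
    (h : Tendsto (fun i => (u : ι → ℝ) i - (v : ι → ℝ) i) l (𝓝 0)) :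
    ultraLim 𝒰 u = ultraLim 𝒰 v := by
  refine ultraLim_eq_of_tendsto ?_
  simpa using (h.mono_left h𝒰).add (tendsto_ultraLim v)

end Ultralimit

section RayMean

variable {G X : Type*} [Group G] [MulAction G X]

lemma lshift_one (f : X → ℝ) : lshift (1 : G) f = f := by
  ext x
  simp [lshift]

lemma lshift_mul (g h : G) (f : X → ℝ) : lshift (g * h) f = lshift g (lshift h f) := by
  ext x
  simp [lshift, mul_smul]

variable (G) in
def invariantSubgroup (m : BddFns X →ₗ[ℝ] ℝ) : Subgroup G where
  carrier := {g | ∀ f : BddFns X, m ⟨lshift g f, lshift_mem g f.2⟩ = m f}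
  one_mem' f := congrArg m (Subtype.ext (lshift_one (G := G) (f : X → ℝ)))
  mul_mem' {g h} hg hh f := by
    rw [← hh f, ← hg ⟨_, lshift_mem h f.2⟩]
    exact congrArg m (Subtype.ext (lshift_mul g h (f : X → ℝ)))
  inv_mem' {g} hg f := by
    rw [← hg ⟨_, lshift_mem g⁻¹ f.2⟩]
    refine congrArg m (Subtype.ext ?_)
    simp only [← lshift_mul, mul_inv_cancel, lshift_one]

lemma mem_invariantSubgroup {m : BddFns X →ₗ[ℝ] ℝ} {g : G} :
    g ∈ invariantSubgroup G m ↔ ∀ f : BddFns X, m ⟨lshift g f, lshift_mem g f.2⟩ = m f :=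
  Iff.rfl

noncomputable def rayMean (𝒰 : Ultrafilter ℕ) (p : ℕ → X) : BddFns X →ₗ[ℝ] ℝ :=
  ultraLim 𝒰 ∘ₗ BddFns.cesaro ∘ₗ BddFns.comap p

variable {𝒰 : Ultrafilter ℕ} {p : ℕ → X}

lemma rayMean_const_one : rayMean 𝒰 p ⟨_, BddFns.const_mem 1⟩ = 1 := by
  have h : BddFns.cesaro (BddFns.comap p ⟨_, BddFns.const_mem 1⟩) = ⟨_, BddFns.const_mem 1⟩ := by
    ext n
    simp only [BddFns.cesaro_apply, BddFns.comap_apply, Finset.sum_const, Finset.card_range,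
      nsmul_eq_mul, mul_one]
    push_cast
    exact div_self (by positivity)
  simp only [rayMean, LinearMap.comp_apply, h, ultraLim_const]

lemma rayMean_nonneg {f : BddFns X} (hf : ∀ x, 0 ≤ (f : X → ℝ) x) : 0 ≤ rayMean 𝒰 p f :=
  ultraLim_nonneg fun n => div_nonneg (Finset.sum_nonneg fun k _ => hf (p k)) (by positivity)

lemma mem_invariantSubgroup_rayMean_of_fixed {g : G} (hg : ∀ k, g⁻¹ • p k = p k) :
    g ∈ invariantSubgroup G (rayMean 𝒰 p) := by
  refine mem_invariantSubgroup.2 fun f => ?_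
  have h : BddFns.comap p ⟨_, lshift_mem g f.2⟩ = BddFns.comap p f := by
    ext k
    exact congrArg (f : X → ℝ) (hg k)
  simp only [rayMean, LinearMap.comp_apply, h]

lemma mem_invariantSubgroup_rayMean_of_shift (h𝒰 : (𝒰 : Filter ℕ) ≤ atTop) {g : G}
    (hg : ∀ k, g⁻¹ • p k = p (k + 1)) : g ∈ invariantSubgroup G (rayMean 𝒰 p) := by
  refine mem_invariantSubgroup.2 fun f => ?_
  have h : BddFns.comap p ⟨_, lshift_mem g f.2⟩ = BddFns.comap (· + 1) (BddFns.comap p f) := by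
    ext k
    exact congrArg (f : X → ℝ) (hg k)
  simp only [rayMean, LinearMap.comp_apply, h]
  exact ultraLim_eq_of_tendsto_sub h𝒰 (BddFns.tendsto_cesaro_comap_succ_sub _)

end RayMean

theorem nonempty_invariantMean_of_ray {G X : Type*} [Group G] [MulAction G X] (p : ℕ → X)
    (t : G) (ht : ∀ k, t⁻¹ • p k = p (k + 1)) (S : Subgroup G) (hS : ∀ g ∈ S, ∀ k, g • p k = p k)
    (hgen : S ⊔ Subgroup.zpowers t = ⊤) : Nonempty (InvariantMean G X) := by
  let 𝒰 : Ultrafilter ℕ := Ultrafilter.of atTop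
  have hinv : invariantSubgroup G (rayMean 𝒰 p) = ⊤ := by
    refine eq_top_iff.2 (hgen ▸ sup_le (fun g hg => ?_) ?_)
    · exact mem_invariantSubgroup_rayMean_of_fixed (hS _ (inv_mem hg))
    · exact Subgroup.zpowers_le.2
        (mem_invariantSubgroup_rayMean_of_shift (Ultrafilter.of_le _) ht)
  exact ⟨⟨rayMean 𝒰 p, rayMean_const_one, fun f hf => rayMean_nonneg hf,
    fun g => mem_invariantSubgroup.1 (hinv ▸ Subgroup.mem_top g)⟩⟩

namespace InvariantMean

variable {G X : Type*} [Group G] [MulAction G X]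

lemma toFun_mono (M : InvariantMean G X) {f g : BddFns X}
    (h : ∀ x, (f : X → ℝ) x ≤ (g : X → ℝ) x) : M.toFun f ≤ M.toFun g := by
  have := M.nonneg (g - f) fun x => sub_nonneg.2 (h x)
  rwa [map_sub, sub_nonneg] at this

def map {Q Y : Type*} [Group Q] [MulAction Q Y] (M : InvariantMean G X) (ψ : G →* Q)
    (hψ : Surjective ψ) (θ : X → Y) (hθ : ∀ g x, θ (g • x) = ψ g • θ x) :
    InvariantMean Q Y where
  toFun := M.toFun ∘ₗ BddFns.comap θ
  norm_one := M.norm_one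
  nonneg f hf := M.nonneg _ fun x => hf (θ x)
  invariant q f := by
    obtain ⟨g, rfl⟩ := hψ q
    rw [LinearMap.comp_apply, LinearMap.comp_apply, ← M.invariant g (BddFns.comap θ f)]
    refine congrArg M.toFun (Subtype.ext (funext fun x => ?_))
    simp only [BddFns.comap_apply, lshift, hθ, map_inv]

end InvariantMean

theorem Subgroup.Coamenable.amenableGroup_of_le_ker {H Q : Type*} [Group H] [Group Q]
    {K : Subgroup H} (hK : K.Coamenable) (ψ : H →* Q) (hψ : Surjective ψ) (hle : K ≤ ψ.ker) :
    AmenableGroup Q := by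
  obtain ⟨M⟩ := hK
  let θ : H ⧸ K → Q := fun x => Quotient.liftOn' x ψ fun a b hab => by
    have := hle (QuotientGroup.leftRel_apply.1 hab)
    rwa [MonoidHom.mem_ker, map_mul, map_inv, inv_mul_eq_one] at this
  refine ⟨M.map ψ hψ θ fun g x => ?_⟩
  induction x using QuotientGroup.induction_on with
  | H a =>
    rw [MulAction.Quotient.smul_mk]
    exact map_mul ψ g a

namespace FreeGroup

variable {α : Type*} [DecidableEq α]

lemma toWord_inv_of_mul (a : α) {x : FreeGroup α} (hx : x.toWord.head? ≠ some (a, true)) :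
    ((of a)⁻¹ * x).toWord = (a, false) :: x.toWord := by
  rw [toWord_mul, toWord_inv, toWord_of]
  refine IsReduced.reduce_eq ?_
  simp only [invRev, List.reverse_singleton, List.map_cons, List.map_nil, Bool.not_true,
    List.singleton_append]
  refine List.isChain_cons.2 ⟨fun ⟨b, c⟩ hy hab => ?_, isReduced_toWord⟩
  cases c
  · rfl
  · simp_all

noncomputable def headIndicator (l : α × Bool) (w : FreeGroup α) : ℝ :=
  if w.toWord.head? = some l then 1 else 0

lemma headIndicator_mem (l : α × Bool) : headIndicator l ∈ BddFns (FreeGroup α) :=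
  ⟨1, fun w => by unfold headIndicator; split_ifs <;> norm_num⟩

variable (M : InvariantMean (FreeGroup α) (FreeGroup α))

lemma one_le_mean_headIndicator_add (a : α) :
    1 ≤ M.toFun ⟨_, headIndicator_mem (a, true)⟩ + M.toFun ⟨_, headIndicator_mem (a, false)⟩ := by
  -- a word not starting with `a` is sent by `a⁻¹` to a word starting with `a⁻¹`
  have hcover : ∀ w : FreeGroup α,
      1 ≤ headIndicator (a, true) w + lshift (of a) (headIndicator (a, false)) w := by
    intro w
    by_cases hw : w.toWord.head? = some (a, true)
    · have : 0 ≤ lshift (of a) (headIndicator (a, false)) w := by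
        unfold lshift headIndicator; split_ifs <;> norm_num
      simp only [headIndicator, hw, if_true]
      linarith
    · simp only [lshift, headIndicator, hw, smul_eq_mul, toWord_inv_of_mul a hw, List.head?_cons,
        if_true, if_false]
      norm_num
  have := M.toFun_mono (f := ⟨_, BddFns.const_mem 1⟩)
    (g := ⟨_, headIndicator_mem (a, true)⟩ + ⟨_, lshift_mem (of a) (headIndicator_mem (a, false))⟩)
    hcover
  rwa [map_add, M.norm_one, M.invariant (of a) ⟨_, headIndicator_mem (a, false)⟩] at this

theorem not_amenableGroup [Nontrivial α] : ¬ AmenableGroup (FreeGroup α) := by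
  rintro ⟨M⟩
  obtain ⟨a, b, hab⟩ := exists_pair_ne α
  have hdisj : ∀ w : FreeGroup α, headIndicator (a, true) w + headIndicator (a, false) w +
      headIndicator (b, true) w + headIndicator (b, false) w ≤ 1 := by
    intro w
    simp only [headIndicator]
    split_ifs <;> simp_all
  have hsum := M.toFun_mono (g := ⟨_, BddFns.const_mem 1⟩)
    (f := ⟨_, headIndicator_mem (a, true)⟩ + ⟨_, headIndicator_mem (a, false)⟩ +
      ⟨_, headIndicator_mem (b, true)⟩ + ⟨_, headIndicator_mem (b, false)⟩) hdisj
  rw [map_add, map_add, map_add, M.norm_one] at hsum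
  linarith [one_le_mean_headIndicator_add M a, one_le_mean_headIndicator_add M b]

end FreeGroup

namespace HNNExtension

variable {G : Type*} [Group G] {A B : Subgroup G} {φ : A ≃* B}

theorem range_of_sup_zpowers_t :
    (of : G →* HNNExtension G A B φ).range ⊔ Subgroup.zpowers t = ⊤ :=
  eq_top_iff.2 fun x _ => induction_on x (fun g => Subgroup.mem_sup_left ⟨g, rfl⟩)
    (Subgroup.mem_sup_right (Subgroup.mem_zpowers t)) (fun _ _ => mul_mem) (fun _ => inv_mem)

instance [Group.FG G] : Group.FG (HNNExtension G A B φ) := by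
  have hzp : (Subgroup.zpowers (t : HNNExtension G A B φ)).FG :=
    ⟨{t}, by rw [Finset.coe_singleton, Subgroup.zpowers_eq_closure]⟩
  rw [Group.fg_def, ← range_of_sup_zpowers_t]
  exact ((Group.fg_iff_subgroup_fg _).1 inferInstance).sup hzp

end HNNExtension

section Ascending

variable {H : Type*} [Group H] {φ : H →* H} (hφ : Injective φ)

/-- The ascending HNN extension `⟨H, t | t h t⁻¹ = φ h⟩` of an injective endomorphism `φ`. -/
abbrev AscendingHNNExtension : Type _ :=
  HNNExtension H ⊤ φ.range (Subgroup.topEquiv.trans (MonoidHom.ofInjective hφ))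

namespace AscendingHNNExtension

open HNNExtension

theorem t_mul_of_mul_inv (h : H) :
    (t : AscendingHNNExtension hφ) * of h * t⁻¹ = of (φ h) := by
  rw [t_mul_of (⟨h, Subgroup.mem_top h⟩ : (⊤ : Subgroup H)), mul_inv_cancel_right]
  rfl

theorem t_pow_mul_of_mul_inv (k : ℕ) (h : H) :
    (t : AscendingHNNExtension hφ) ^ k * of h * (t ^ k)⁻¹ = of (φ^[k] h) := by
  induction k generalizing h with
  | zero => simp
  | succ k ih =>
    calc (t : AscendingHNNExtension hφ) ^ (k + 1) * of h * (t ^ (k + 1))⁻¹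
        = t * (t ^ k * of h * (t ^ k)⁻¹) * t⁻¹ := by group
      _ = of (φ (φ^[k] h)) := by rw [ih, t_mul_of_mul_inv]
      _ = of (φ^[k + 1] h) := by rw [iterate_succ_apply']

theorem coamenable_range_of_comp :
    ((of : H →* AscendingHNNExtension hφ).comp φ).range.Coamenable := by
  let p (k : ℕ) : AscendingHNNExtension hφ ⧸ ((of : H →* _).comp φ).range :=
    QuotientGroup.mk (t ^ (k + 1))⁻¹
  refine nonempty_invariantMean_of_ray p t (fun k => ?_) of.range ?_ range_of_sup_zpowers_t
  · rw [MulAction.Quotient.smul_mk, smul_eq_mul, ← mul_inv_rev, ← pow_succ]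
  · rintro _ ⟨h, rfl⟩ k
    rw [MulAction.Quotient.smul_mk, eq_comm, QuotientGroup.eq, smul_eq_mul, inv_inv, ← mul_assoc,
      t_pow_mul_of_mul_inv, iterate_succ_apply']
    exact ⟨_, rfl⟩

theorem not_coamenable_subgroupOf {Q : Type*} [Group Q] (π : H →* Q)
    (hπ : Surjective π) (hπφ : ∀ h, π (φ h) = 1) (hQ : ¬ AmenableGroup Q) :
    ¬ (((of : H →* AscendingHNNExtension hφ).comp φ).range.subgroupOf of.range).Coamenable := by
  intro hK
  let e : H ≃* (of : H →* AscendingHNNExtension hφ).range := MonoidHom.ofInjective (of_injective _)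
  refine hQ (hK.amenableGroup_of_le_ker (π.comp e.symm.toMonoidHom) (hπ.comp e.symm.surjective) ?_)
  rintro x ⟨h, hx⟩
  have : e.symm x = φ h := e.symm_apply_eq.2 (Subtype.ext hx.symm)
  change π (e.symm x) = 1
  rw [this, hπφ]

end AscendingHNNExtension

end Ascending

namespace FreeGroup

noncomputable def conjPowers : FreeGroup ℤ →* FreeGroup (Fin 2) :=
  FreeGroup.lift fun n => (of 0 ^ n)⁻¹ * of 1 * of 0 ^ n

/-- On level `0` of `ℤ × FreeGroup ℤ`, `conjPowers u` acts as left multiplication by `u`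
(`ladder_conjPowers`); this is what makes `conjPowers` injective. -/
def ladder : FreeGroup (Fin 2) →* Equiv.Perm (ℤ × FreeGroup ℤ) :=
  FreeGroup.lift ![Equiv.prodCongr (Equiv.addRight 1) (Equiv.refl _),
    Equiv.prodShear (Equiv.refl ℤ) fun n => Equiv.mulLeft (of n)]

lemma ladder_of_zero (x : ℤ × FreeGroup ℤ) : ladder (of 0) x = (x.1 + 1, x.2) := by
  simp [ladder, Prod.map]

lemma ladder_of_one (x : ℤ × FreeGroup ℤ) : ladder (of 1) x = (x.1, of x.1 * x.2) := by
  simp [ladder]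

lemma ladder_of_zero_zpow (n : ℤ) (x : ℤ × FreeGroup ℤ) :
    ladder (of 0 ^ n) x = (x.1 + n, x.2) := by
  induction n using Int.induction_on generalizing x with
  | zero => simp
  | succ n ih =>
    rw [zpow_add_one, _root_.map_mul, Equiv.Perm.mul_apply, ladder_of_zero, ih]
    exact Prod.ext (by dsimp; ring) rfl
  | pred n ih =>
    have hinv : (ladder (of 0))⁻¹ x = (x.1 - 1, x.2) := by
      rw [Equiv.Perm.inv_eq_iff_eq, ladder_of_zero, sub_add_cancel]
    rw [zpow_sub_one, _root_.map_mul, Equiv.Perm.mul_apply, _root_.map_inv, hinv, ih]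
    exact Prod.ext (by ring) rfl

lemma ladder_conjPowers (u : FreeGroup ℤ) (w : FreeGroup ℤ) :
    ladder (conjPowers u) (0, w) = (0, u * w) := by
  induction u using FreeGroup.induction_on generalizing w with
  | C1 => simp
  | of n =>
    rw [conjPowers, lift_apply_of, _root_.map_mul, _root_.map_mul, _root_.map_inv,
      Equiv.Perm.mul_apply, Equiv.Perm.mul_apply, ladder_of_zero_zpow, ladder_of_one,
      Equiv.Perm.inv_eq_iff_eq, ladder_of_zero_zpow]
    simp
  | inv_of n ih =>
    rw [_root_.map_inv, _root_.map_inv, Equiv.Perm.inv_eq_iff_eq, ih, mul_inv_cancel_left]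
  | mul x y hx hy => simp [hx, hy, mul_assoc]

theorem conjPowers_injective : Injective conjPowers := by
  refine (injective_iff_map_eq_one _).2 fun u hu => ?_
  have h := ladder_conjPowers u 1
  rw [hu, _root_.map_one, Equiv.Perm.one_apply, mul_one] at h
  exact (Prod.ext_iff.1 h).2.symm

variable {α β : Type*}

def projLeft : FreeGroup (α ⊕ β) →* FreeGroup α :=
  FreeGroup.lift (Sum.elim of 1)

lemma projLeft_map_inl (x : FreeGroup α) : projLeft (map (Sum.inl : α → α ⊕ β) x) = x := by
  induction x using FreeGroup.induction_on <;> simp_all [projLeft]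

lemma projLeft_map_inr (x : FreeGroup β) : projLeft (map (Sum.inr : β → α ⊕ β) x) = 1 := by
  induction x using FreeGroup.induction_on <;> simp_all [projLeft]

lemma projLeft_surjective : Surjective (projLeft : FreeGroup (α ⊕ β) →* FreeGroup α) :=
  fun x => ⟨_, projLeft_map_inl x⟩

end FreeGroup

universe u

noncomputable def embedIntoRight :
    FreeGroup (Fin 2 ⊕ ULift.{u} (Fin 2)) →* FreeGroup (Fin 2 ⊕ ULift.{u} (Fin 2)) :=
  (FreeGroup.map Sum.inr).comp <| (FreeGroup.map ULift.up).comp <| FreeGroup.conjPowers.comp <|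
    FreeGroup.map fun x => ((finSumFinEquiv (Sum.map id ULift.down x) : ℕ) : ℤ)

lemma embedIntoRight_injective : Injective embedIntoRight :=
  (FreeGroup.map_injective Sum.inr_injective).comp <|
    (FreeGroup.map_injective ULift.up_injective).comp <| FreeGroup.conjPowers_injective.comp <|
      FreeGroup.map_injective <| Nat.cast_injective.comp <| Fin.val_injective.comp <|
        finSumFinEquiv.injective.comp <| Sum.map_injective.2 ⟨injective_id, ULift.down_injective⟩

lemma projLeft_embedIntoRight (x : FreeGroup (Fin 2 ⊕ ULift.{u} (Fin 2))) :
    FreeGroup.projLeft (embedIntoRight x) = 1 :=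
  FreeGroup.projLeft_map_inr _

/-- There are triples `K ≤ H₀ ≤ G` of finitely generated groups with `K`
co-amenable in `G` but not in `H₀`. -/
theorem exists_fg_coamenable_not_hereditary :
    ∃ (G : GrpCat) (H₀ K : Subgroup G), K ≤ H₀ ∧
      Group.FG G ∧ Group.FG H₀ ∧ Group.FG K ∧
      K.Coamenable ∧ ¬ (K.subgroupOf H₀).Coamenable := by
  refine ⟨GrpCat.of (AscendingHNNExtension embedIntoRight_injective), HNNExtension.of.range,
    (HNNExtension.of.comp embedIntoRight).range,
    ?_, inferInstance, inferInstance, inferInstance,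
    AscendingHNNExtension.coamenable_range_of_comp embedIntoRight_injective,
    AscendingHNNExtension.not_coamenable_subgroupOf embedIntoRight_injective FreeGroup.projLeft
      FreeGroup.projLeft_surjective projLeft_embedIntoRight FreeGroup.not_amenableGroup⟩
  rw [MonoidHom.range_comp]
  exact Subgroup.map_le_range _ _
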